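/- Let A be a positive semidefinite operator on ℂ^m with m ≥ 1, and let a' > 0 satisfy ‖A‖ < a' and ‖A‖ < 1. Then Tr((a'I − A)^{-2}(I − A)) ≤ (1/m)·Tr((a'I − A)^{-2})·Tr(I − A). -/

import Mathlib

/-!
Diagonalising `A`, each of the three traces is a sum over the eigenvalues `λᵢ` of `A`, all of
which are `< a'` since they are bounded by `‖A‖`. On `(-∞, a')` the function `(a' - x)⁻²`
increases while `1 - x` decreases, so the claim is Chebyshev's sum inequality for the
oppositely ordered sequences `(a' - λᵢ)⁻²` and `1 - λᵢ`.
-/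

open scoped ComplexOrder

namespace Matrix.IsHermitian

variable {n 𝕜 : Type*} [RCLike 𝕜] [Fintype n] [DecidableEq n] {A : Matrix n n 𝕜}

lemma eigenvalues_le_norm_toEuclideanCLM (hA : A.IsHermitian) (i : n) :
    hA.eigenvalues i ≤ ‖toEuclideanCLM (𝕜 := 𝕜) A‖ := by
  have hmem : (hA.eigenvalues i : 𝕜) ∈ spectrum 𝕜 (toEuclideanCLM (𝕜 := 𝕜) A) := by
    rw [AlgEquiv.spectrum_eq (toEuclideanCLM (n := n) (𝕜 := 𝕜))]
    exact spectrum.algebraMap_mem 𝕜 (hA.eigenvalues_mem_spectrum_real i)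
  calc hA.eigenvalues i ≤ ‖(hA.eigenvalues i : 𝕜)‖ := by
        rw [RCLike.norm_ofReal]; exact le_abs_self _
    _ ≤ ‖toEuclideanCLM (𝕜 := 𝕜) A‖ * ‖(1 : EuclideanSpace 𝕜 n →L[𝕜] EuclideanSpace 𝕜 n)‖ :=
        spectrum.norm_le_norm_mul_of_mem hmem
    _ ≤ ‖toEuclideanCLM (𝕜 := 𝕜) A‖ :=
        mul_le_of_le_one_right (norm_nonneg _) ContinuousLinearMap.norm_id_le

lemma trace_cfc (hA : A.IsHermitian) (f : ℝ → ℝ) :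
    (cfc f A).trace = ∑ i, (f (hA.eigenvalues i) : 𝕜) := by
  rw [hA.cfc_eq, IsHermitian.cfc, Unitary.conjStarAlgAut_apply, trace_mul_cycle,
    Unitary.coe_star_mul_self, one_mul, trace_diagonal]
  rfl

lemma inv_smul_one_sub_eq_cfc (hA : A.IsHermitian) {r : ℝ} (hr : r ∉ spectrum ℝ A) :
    ((r : 𝕜) • (1 : Matrix n n 𝕜) - A)⁻¹ = cfc (fun x => (r - x)⁻¹) A := by
  have hsa : IsSelfAdjoint A := hA
  have hshift : (r : 𝕜) • (1 : Matrix n n 𝕜) - A = cfc (fun x => r - x) A := by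
    rw [cfc_sub _ _ A, cfc_const r A, cfc_id' ℝ A, Algebra.algebraMap_eq_smul_one,
      RCLike.real_smul_eq_coe_smul (K := 𝕜)]
  rw [hshift, cfc_inv _ A (fun x hx => sub_ne_zero.2 (ne_of_mem_of_not_mem hx hr).symm),
    Matrix.nonsing_inv_eq_ringInverse]

lemma card_mul_trace_cfc_mul_le (hA : A.IsHermitian) {f g : ℝ → ℝ}
    (hf : MonotoneOn f (spectrum ℝ A)) (hg : AntitoneOn g (spectrum ℝ A)) :
    (Fintype.card n : 𝕜) * (cfc f A * cfc g A).trace ≤ (cfc f A).trace * (cfc g A).trace := by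
  have hfg : Antivary (f ∘ hA.eigenvalues) (g ∘ hA.eigenvalues) := fun i j hij =>
    hf.antivaryOn hg (hA.eigenvalues_mem_spectrum_real i) (hA.eigenvalues_mem_spectrum_real j) hij
  rw [← cfc_mul f g A (A.finite_real_spectrum.continuousOn f)
    (A.finite_real_spectrum.continuousOn g), hA.trace_cfc, hA.trace_cfc, hA.trace_cfc]
  exact_mod_cast hfg.card_mul_sum_le_sum_mul_sum

end Matrix.IsHermitian

theorem stmt14_general {m : ℕ} (hm : 1 ≤ m) (A : Matrix (Fin m) (Fin m) ℂ) (hA : A.PosSemidef)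
    (a' : ℝ)
    (hnorm : ‖Matrix.toEuclideanCLM (𝕜 := ℂ) A‖ < a') :
    Matrix.trace ((((a' : ℂ) • (1 : Matrix (Fin m) (Fin m) ℂ) - A)⁻¹) ^ 2 * (1 - A)) ≤
      (1 / (m : ℂ)) *
        Matrix.trace ((((a' : ℂ) • (1 : Matrix (Fin m) (Fin m) ℂ) - A)⁻¹) ^ 2) *
        Matrix.trace (1 - A) := by
  have hsa : IsSelfAdjoint A := hA.1
  have hspec : ∀ x ∈ spectrum ℝ A, x < a' := by
    rw [hA.1.spectrum_real_eq_range_eigenvalues]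
    rintro - ⟨i, rfl⟩
    exact (hA.1.eigenvalues_le_norm_toEuclideanCLM i).trans_lt hnorm
  have hres : (((a' : ℂ) • (1 : Matrix (Fin m) (Fin m) ℂ) - A)⁻¹) ^ 2 =
      cfc (fun x : ℝ => ((a' - x)⁻¹) ^ 2) A := by
    rw [cfc_pow _ 2 A (A.finite_real_spectrum.continuousOn _),
      ← hA.1.inv_smul_one_sub_eq_cfc (fun h => lt_irrefl a' (hspec a' h))]
    -- the `RCLike` coercion `ℝ → ℂ` is `Complex.ofReal` only up to unfolding
    rfl
  have hone_sub : 1 - A = cfc (fun x : ℝ => 1 - x) A := by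
    rw [cfc_sub _ _ A, cfc_const_one ℝ A, cfc_id' ℝ A]
  have hf : MonotoneOn (fun x : ℝ => ((a' - x)⁻¹) ^ 2) (spectrum ℝ A) := by
    intro x _ y hy hxy
    have hy' : 0 < a' - y := sub_pos.2 (hspec y hy)
    have hx' : 0 < a' - x := by linarith
    dsimp only
    gcongr
  have hg : AntitoneOn (fun x : ℝ => 1 - x) (spectrum ℝ A) := fun x _ y _ hxy => by
    dsimp only; linarith
  have cheb := hA.1.card_mul_trace_cfc_mul_le hf hg
  rw [Fintype.card_fin, ← hres, ← hone_sub] at cheb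
  have hm0 : (m : ℂ) ≠ 0 := by exact_mod_cast (Nat.one_le_iff_ne_zero.1 hm)
  calc _ = 1 / (m : ℂ) * ((m : ℂ) * _) := by field_simp
    _ ≤ _ := by rw [mul_assoc]; gcongr

/-- If `A ⪰ 0` on `ℂ^m` (`m ≥ 1`), `a' > 0`, `‖A‖ < a'` and `‖A‖ < 1`, then
`Tr((a'I - A)⁻² (I - A)) ≤ (1/m) · Tr((a'I - A)⁻²) · Tr(I - A)`. -/
theorem stmt14 {m : ℕ} (hm : 1 ≤ m) (A : Matrix (Fin m) (Fin m) ℂ) (hA : A.PosSemidef)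
    (a' : ℝ) (ha' : 0 < a')
    (hnorm : ‖Matrix.toEuclideanCLM (𝕜 := ℂ) A‖ < a')
    (hnorm1 : ‖Matrix.toEuclideanCLM (𝕜 := ℂ) A‖ < 1) :
    Matrix.trace ((((a' : ℂ) • (1 : Matrix (Fin m) (Fin m) ℂ) - A)⁻¹) ^ 2 * (1 - A)) ≤
      (1 / (m : ℂ)) *
        Matrix.trace ((((a' : ℂ) • (1 : Matrix (Fin m) (Fin m) ℂ) - A)⁻¹) ^ 2) *
        Matrix.trace (1 - A) :=
  stmt14_general hm A hA a' hnorm
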